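/- Let G(x) = g(x) + 6·L(x)·(1 − L(x)). Then G(x) > 0 for all x < x⁻, G(x⁻) = 0, and G(x) < 0 for all x > x⁻, where x⁻ is the unique real root of g. Consequently, for every γ > 0, x⁻ is the unique and globally asymptotically stable equilibrium of the scalar ODE ẋ = γ·G(x). -/

import Mathlib

/-- The cubic `g(x) = 3x - x³ - 3`. -/
noncomputable def gcub (x : ℝ) : ℝ := 3 * x - x ^ 3 - 3
/-- The piecewise linear function `L`. -/
noncomputable def Lpl (x : ℝ) : ℝ := if x ≤ -1 then 0 else if x < 1 then (x + 1) / 2 else 1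

/-!
Writing `g x = -((x - 1)² (x + 2)) - 1` shows `g < 0` on `[-2, ∞)`, so `x⁻ < -2`. On `(-∞, -1]`
we have `L = 0`, hence `G = g` there, and `g` is strictly decreasing on that ray; on `(-1, ∞)` a
direct polynomial estimate gives `G < 0`. Thus `(x - x⁻) G(x) < 0` for `x ≠ x⁻`, which makes
`(x(t) - x⁻)²` a Lyapunov function: it is nonincreasing along solutions, and as long as the
solution stays in an annulus `ε ≤ |x - x⁻| ≤ R` its derivative is bounded above by a negative
constant (continuity and compactness), so the solution must enter every `ε`-ball.
-/

open Set Filter Topology Metric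

lemma gcub_eq (x : ℝ) : gcub x = -((x - 1) ^ 2 * (x + 2)) - 1 := by
  unfold gcub; ring

lemma gcub_neg_of_neg_two_le {x : ℝ} (hx : -2 ≤ x) : gcub x < 0 := by
  rw [gcub_eq]
  nlinarith [mul_nonneg (sq_nonneg (x - 1)) (by linarith : (0 : ℝ) ≤ x + 2)]

lemma lt_neg_two_of_gcub_eq_zero {x : ℝ} (hx : gcub x = 0) : x < -2 := by
  by_contra! h
  exact (gcub_neg_of_neg_two_le h).ne hx

lemma gcub_strictAntiOn : StrictAntiOn gcub (Iic (-1)) := by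
  intro x hx y hy hxy
  simp only [mem_Iic] at hx hy
  have hquad : 3 < x ^ 2 + x * y + y ^ 2 := by nlinarith
  have hdiff : gcub y - gcub x = (x - y) * (x ^ 2 + x * y + y ^ 2 - 3) := by unfold gcub; ring
  nlinarith

lemma Lpl_of_le_neg_one {x : ℝ} (hx : x ≤ -1) : Lpl x = 0 := if_pos hx

lemma continuous_Lpl : Continuous Lpl := by
  have hclamp : Lpl = fun x => max 0 (min 1 ((x + 1) / 2)) := by
    ext x
    unfold Lpl
    split_ifs with h1 h2
    · rw [min_eq_right (by linarith), max_eq_left (by linarith)]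
    · rw [min_eq_right (by linarith), max_eq_right (by linarith)]
    · rw [min_eq_left (by linarith), max_eq_right (by norm_num)]
  rw [hclamp]
  fun_prop

/-- The right-hand side `G` of equation (18). -/
noncomputable def Gcontra (x : ℝ) : ℝ := gcub x + 6 * Lpl x * (1 - Lpl x)

lemma continuous_Gcontra : Continuous Gcontra := by
  have hg : Continuous gcub := by unfold gcub; fun_prop
  have hL := continuous_Lpl
  unfold Gcontra
  fun_prop

lemma Gcontra_of_le_neg_one {x : ℝ} (hx : x ≤ -1) : Gcontra x = gcub x := by
  simp [Gcontra, Lpl_of_le_neg_one hx]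

lemma Gcontra_neg_of_neg_one_lt {x : ℝ} (hx : -1 < x) : Gcontra x < 0 := by
  unfold Gcontra Lpl
  split_ifs with h1 h2
  · linarith
  · -- here `-2 G(x) = 3 (1 - x)² + 2 x³` with `|x| < 1`
    unfold gcub
    nlinarith [mul_pos (by linarith : (0 : ℝ) < x + 1) (by linarith : (0 : ℝ) < 1 - x),
      sq_nonneg (x - 1 / 2), sq_nonneg x]
  · have := gcub_neg_of_neg_two_le (by linarith : (-2 : ℝ) ≤ x)
    linarith

section Sign

variable {xm : ℝ} (hxm : gcub xm = 0)
include hxm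

lemma Gcontra_pos_of_lt {x : ℝ} (hx : x < xm) : 0 < Gcontra x := by
  have hxm1 : xm ≤ -1 := by linarith [lt_neg_two_of_gcub_eq_zero hxm]
  rw [Gcontra_of_le_neg_one (hx.le.trans hxm1), ← hxm]
  exact gcub_strictAntiOn (hx.le.trans hxm1) hxm1 hx

lemma Gcontra_neg_of_gt {x : ℝ} (hx : xm < x) : Gcontra x < 0 := by
  rcases le_or_gt x (-1) with hx1 | hx1
  · rw [Gcontra_of_le_neg_one hx1, ← hxm]
    exact gcub_strictAntiOn (hx.le.trans hx1) hx1 hx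
  · exact Gcontra_neg_of_neg_one_lt hx1

lemma Gcontra_root : Gcontra xm = 0 := by
  rw [Gcontra_of_le_neg_one (by linarith [lt_neg_two_of_gcub_eq_zero hxm]), hxm]

lemma Gcontra_eq_zero_iff {z : ℝ} : Gcontra z = 0 ↔ z = xm := by
  refine ⟨fun hz => ?_, fun hz => hz ▸ Gcontra_root hxm⟩
  rcases lt_trichotomy z xm with h | h | h
  · exact absurd hz (Gcontra_pos_of_lt hxm h).ne'
  · exact h
  · exact absurd hz (Gcontra_neg_of_gt hxm h).ne

lemma sub_mul_Gcontra_neg {y : ℝ} (hy : y ≠ xm) : (y - xm) * Gcontra y < 0 := by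
  rcases hy.lt_or_gt with h | h
  · exact mul_neg_of_neg_of_pos (sub_neg.2 h) (Gcontra_pos_of_lt hxm h)
  · exact mul_neg_of_pos_of_neg (sub_pos.2 h) (Gcontra_neg_of_gt hxm h)

end Sign

lemma antitoneOn_Ici_of_hasDerivAt_nonpos {F F' : ℝ → ℝ} {t₀ : ℝ}
    (hF : ∀ t, t₀ ≤ t → HasDerivAt F (F' t) t) (hF' : ∀ t, t₀ ≤ t → F' t ≤ 0) :
    AntitoneOn F (Ici t₀) := by
  refine antitoneOn_of_hasDerivWithinAt_nonpos (f' := F') (convex_Ici t₀)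
    (fun t ht => (hF t ht).continuousAt.continuousWithinAt) (fun t ht => ?_) (fun t ht => ?_)
  · rw [interior_Ici] at ht
    exact (hF t ht.le).hasDerivWithinAt
  · rw [interior_Ici] at ht
    exact hF' t ht.le

section Lyapunov

variable {f : ℝ → ℝ} {a : ℝ} {x : ℝ → ℝ}

lemma hasDerivAt_sub_sq (hx : ∀ t, 0 ≤ t → HasDerivAt x (f (x t)) t) {t : ℝ} (ht : 0 ≤ t) :
    HasDerivAt (fun s => (x s - a) ^ 2) (2 * ((x t - a) * f (x t))) t :=
  (((hx t ht).sub_const a).fun_pow 2).congr_deriv (by norm_num; ring)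

lemma antitoneOn_dist_of_sub_mul_nonpos (hnonpos : ∀ y, (y - a) * f y ≤ 0)
    (hx : ∀ t, 0 ≤ t → HasDerivAt x (f (x t)) t) :
    AntitoneOn (fun t => dist (x t) a) (Ici 0) := by
  have hsq : AntitoneOn (fun t => (x t - a) ^ 2) (Ici 0) :=
    antitoneOn_Ici_of_hasDerivAt_nonpos (fun t ht => hasDerivAt_sub_sq hx ht)
      (fun t _ => by linarith [hnonpos (x t)])
  intro s hs t ht hst
  simpa only [Real.dist_eq, sq_le_sq] using hsq hs ht hst

variable (hsign : ∀ y, y ≠ a → (y - a) * f y < 0)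
include hsign

lemma sub_mul_nonpos_of_sub_mul_neg (y : ℝ) : (y - a) * f y ≤ 0 := by
  rcases eq_or_ne y a with rfl | hy
  · simp
  · exact (hsign y hy).le

variable (hf : Continuous f) (hx : ∀ t, 0 ≤ t → HasDerivAt x (f (x t)) t)
include hf hx

lemma exists_dist_lt_of_sub_mul_neg {ε : ℝ} (hε : 0 < ε) : ∃ T, 0 ≤ T ∧ dist (x T) a < ε := by
  by_contra! hfar
  have hmono := antitoneOn_dist_of_sub_mul_nonpos (sub_mul_nonpos_of_sub_mul_neg hsign) hx
  set K := closedBall a (dist (x 0) a) \ ball a ε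
  have hK : ∀ t, 0 ≤ t → x t ∈ K := fun t ht =>
    ⟨mem_closedBall.2 (hmono self_mem_Ici ht ht), fun h => (hfar t ht).not_gt (mem_ball.1 h)⟩
  obtain ⟨y, hyK, hymax⟩ := ((isCompact_closedBall _ _).diff isOpen_ball).exists_isMaxOn
    ⟨x 0, hK 0 le_rfl⟩ (f := fun y => (y - a) * f y) (by fun_prop)
  set m := (y - a) * f y
  have hm : m < 0 := hsign y fun h => hyK.2 (h ▸ mem_ball_self hε)
  have hdecay : AntitoneOn (fun t => (x t - a) ^ 2 - 2 * m * t) (Ici 0) := by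
    refine antitoneOn_Ici_of_hasDerivAt_nonpos
      (fun t ht => (hasDerivAt_sub_sq hx ht).sub ((hasDerivAt_id t).const_mul (2 * m)))
      (fun t ht => ?_)
    have hmax : (x t - a) * f (x t) ≤ m := hymax (hK t ht)
    linarith
  -- the bound `(x t - a)² ≤ (x 0 - a)² + 2 m t` is nonpositive at time `T`
  set T := (x 0 - a) ^ 2 / -m
  have hT : 0 ≤ T := div_nonneg (sq_nonneg _) (neg_nonneg.2 hm.le)
  have hmT : 2 * m * T = -2 * (x 0 - a) ^ 2 := by
    simp only [T]
    field_simp [hm.ne]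
  have hbound := hdecay self_mem_Ici hT hT
  simp only [mul_zero, sub_zero, hmT] at hbound
  have hfarT : ε ^ 2 ≤ (x T - a) ^ 2 := by
    rw [← sq_abs (x T - a), ← Real.dist_eq]
    exact pow_le_pow_left₀ hε.le (hfar T hT) 2
  nlinarith [sq_nonneg (x 0 - a)]

theorem tendsto_of_sub_mul_neg : Tendsto x atTop (𝓝 a) := by
  have hmono := antitoneOn_dist_of_sub_mul_nonpos (sub_mul_nonpos_of_sub_mul_neg hsign) hx
  refine Metric.tendsto_atTop.2 fun ε hε => ?_
  obtain ⟨T, hT, hTε⟩ := exists_dist_lt_of_sub_mul_neg hsign hf hx hε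
  exact ⟨T, fun t ht => (hmono hT (hT.trans ht) ht).trans_lt hTε⟩

end Lyapunov

theorem stmt_15 (xm : ℝ) (hxm : gcub xm = 0)
    (G : ℝ → ℝ) (hG : ∀ x, G x = gcub x + 6 * Lpl x * (1 - Lpl x)) :
    (∀ x, x < xm → 0 < G x) ∧ G xm = 0 ∧ (∀ x, xm < x → G x < 0) ∧
    ∀ γ : ℝ, 0 < γ →
      (∀ z : ℝ, γ * G z = 0 ↔ z = xm) ∧
      (∀ x : ℝ → ℝ, (∀ t : ℝ, 0 ≤ t → HasDerivAt x (γ * G (x t)) t) →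
        Filter.Tendsto x Filter.atTop (nhds xm)) := by
  obtain rfl : G = Gcontra := funext hG
  refine ⟨fun x => Gcontra_pos_of_lt hxm, Gcontra_root hxm, fun x => Gcontra_neg_of_gt hxm,
    fun γ hγ => ⟨fun z => ?_, fun x hx => ?_⟩⟩
  · rw [mul_eq_zero, or_iff_right hγ.ne', Gcontra_eq_zero_iff hxm]
  · refine tendsto_of_sub_mul_neg (fun y hy => ?_) (continuous_Gcontra.const_mul γ) hx
    rw [mul_left_comm]
    exact mul_neg_of_pos_of_neg hγ (sub_mul_Gcontra_neg hxm hy)
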